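/- arXiv:2412.06731 — 5 statements merged into one kernel-verified Lean document; each statement's English description precedes it below -/
import Mathlib

section
/- Let f be L-smooth convex with minimizer x_⋆, let x₀ ∈ ℝ^d, g₀ = ∇f(x₀), and z₁ = x₀ − (2/L)g₀. Then f(x₀)⁺ − f(x_⋆) + (L/4)‖z₁ − x_⋆‖² ≤ (L/4)‖x₀ − x_⋆‖², where f(x₀)⁺ = f(x₀) − (1/(2L))‖g₀‖². -/
/-! At x = x₀, y = x⋆ (where ∇f x⋆ = 0), the interpolation inequality
`f x + ⟪∇f x, y - x⟫ + ‖∇f y - ∇f x‖² / (2L) ≤ f y` of a convex L-smooth function is the claim,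
once `‖z₁ - x⋆‖²` is expanded. The interpolation inequality compares `f` at the gradient step
`y - (∇f y - ∇f x) / L` from below by convexity at `x` and from above by the descent lemma at `y`. -/

open Set InnerProductSpace AffineMap

section

variable {F : Type*} [NormedAddCommGroup F] [InnerProductSpace ℝ F] [CompleteSpace F]
  {f : F → ℝ} {f' : F → F} {L : ℝ}

theorem HasGradientAt.hasDerivAt_comp_lineMap {g x y : F} {t : ℝ}
    (h : HasGradientAt f g (lineMap x y t)) :
    HasDerivAt (fun s : ℝ => f (lineMap x y s)) ⟪g, y - x⟫_ℝ t :=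
  (hasGradientAt_iff_hasFDerivAt.mp h).comp_hasDerivAt t hasDerivAt_lineMap

theorem IsLocalMin.hasGradientAt_eq_zero {g x : F} (hmin : IsLocalMin f x)
    (h : HasGradientAt f g x) : g = 0 :=
  (toDual ℝ F).map_eq_zero_iff.mp (hmin.hasFDerivAt_eq_zero (hasGradientAt_iff_hasFDerivAt.mp h))

theorem ConvexOn.add_inner_le_of_hasGradientAt {g x : F} (hconv : ConvexOn ℝ univ f)
    (h : HasGradientAt f g x) (y : F) : f x + ⟪g, y - x⟫_ℝ ≤ f y := by
  have hline : ConvexOn ℝ univ (fun t : ℝ => f (lineMap x y t)) :=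
    hconv.comp_affineMap (lineMap x y)
  have hderiv := (lineMap_apply_zero (k := ℝ) x y ▸ h).hasDerivAt_comp_lineMap
  have := hline.le_slope_of_hasDerivAt (mem_univ 0) (mem_univ 1) zero_lt_one hderiv
  simp only [slope_def_field, lineMap_apply_one, lineMap_apply_zero] at this
  linarith

theorem le_add_inner_add_sq_norm_of_lipschitz_gradient
    (hdiff : ∀ x, HasGradientAt f (f' x) x) (hsmooth : ∀ x y, ‖f' x - f' y‖ ≤ L * ‖x - y‖)
    (x y : F) : f y ≤ f x + ⟪f' x, y - x⟫_ℝ + L / 2 * ‖y - x‖ ^ 2 := by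
  set v := y - x
  have hφ (t : ℝ) := (hdiff (lineMap x y t)).hasDerivAt_comp_lineMap
  have hB (t : ℝ) : HasDerivAt (fun s : ℝ => f x + (s * ⟪f' x, v⟫_ℝ + L / 2 * s ^ 2 * ‖v‖ ^ 2))
      (⟪f' x, v⟫_ℝ + L * t * ‖v‖ ^ 2) t := by
    have hsq : HasDerivAt (fun s : ℝ => s ^ 2) (2 * t) t := by simpa using hasDerivAt_pow 2 t
    exact ((hasDerivAt_mul_const _).add ((hsq.const_mul (L / 2)).mul_const _)).const_add (f x)
      |>.congr_deriv (by ring)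
  have hbound (t : ℝ) (ht : 0 ≤ t) :
      ⟪f' (lineMap x y t), v⟫_ℝ ≤ ⟪f' x, v⟫_ℝ + L * t * ‖v‖ ^ 2 := by
    have hdist : ‖lineMap x y t - x‖ = t * ‖v‖ := by
      rw [lineMap_apply_module', add_sub_cancel_right, norm_smul, Real.norm_eq_abs,
        abs_of_nonneg ht]
    calc ⟪f' (lineMap x y t), v⟫_ℝ
        = ⟪f' x, v⟫_ℝ + ⟪f' (lineMap x y t) - f' x, v⟫_ℝ := by rw [inner_sub_left]; ring
      _ ≤ ⟪f' x, v⟫_ℝ + ‖f' (lineMap x y t) - f' x‖ * ‖v‖ := by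
          gcongr; exact real_inner_le_norm _ _
      _ ≤ ⟪f' x, v⟫_ℝ + L * ‖lineMap x y t - x‖ * ‖v‖ := by gcongr; exact hsmooth _ _
      _ = ⟪f' x, v⟫_ℝ + L * t * ‖v‖ ^ 2 := by rw [hdist]; ring
  have := image_le_of_deriv_right_le_deriv_boundary (a := 0) (b := 1)
    (fun t _ => (hφ t).continuousAt.continuousWithinAt) (fun t _ => (hφ t).hasDerivWithinAt)
    (by simp) (fun t _ => (hB t).continuousAt.continuousWithinAt)
    (fun t _ => (hB t).hasDerivWithinAt)
    (fun t ht => hbound t ht.1) (right_mem_Icc.mpr zero_le_one)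
  simpa [add_assoc] using this

theorem ConvexOn.add_inner_add_sq_norm_sub_le (hconv : ConvexOn ℝ univ f)
    (hdiff : ∀ x, HasGradientAt f (f' x) x) (hsmooth : ∀ x y, ‖f' x - f' y‖ ≤ L * ‖x - y‖)
    (hL : 0 < L) (x y : F) :
    f x + ⟪f' x, y - x⟫_ℝ + 1 / (2 * L) * ‖f' y - f' x‖ ^ 2 ≤ f y := by
  set w := f' y - f' x
  set y' := y - L⁻¹ • w
  have hlow := hconv.add_inner_le_of_hasGradientAt (hdiff x) y'
  have hup := le_add_inner_add_sq_norm_of_lipschitz_gradient hdiff hsmooth y y'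
  have hw : ⟪f' y, w⟫_ℝ - ⟪f' x, w⟫_ℝ = ‖w‖ ^ 2 := by
    rw [← inner_sub_left, real_inner_self_eq_norm_sq]
  rw [show y' - x = (y - x) - L⁻¹ • w by simp only [y']; abel, inner_sub_right,
    real_inner_smul_right] at hlow
  rw [show y' - y = -(L⁻¹ • w) by simp only [y']; abel, inner_neg_right, real_inner_smul_right,
    norm_neg, norm_smul, mul_pow, Real.norm_eq_abs, sq_abs] at hup
  have hL' : L * L⁻¹ = 1 := mul_inv_cancel₀ hL.ne'
  rw [one_div, mul_inv]
  linear_combination hlow + hup - L⁻¹ * hw + (‖w‖ ^ 2 * L⁻¹ / 2) * hL'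

end

theorem spgm_initialization {d : ℕ} (L : ℝ) (hL : 0 < L)
    (f : EuclideanSpace ℝ (Fin d) → ℝ)
    (f' : EuclideanSpace ℝ (Fin d) → EuclideanSpace ℝ (Fin d))
    (hconv : ConvexOn ℝ Set.univ f)
    (hdiff : ∀ x, HasGradientAt f (f' x) x)
    (hsmooth : ∀ x y, ‖f' x - f' y‖ ≤ L * ‖x - y‖)
    (xstar : EuclideanSpace ℝ (Fin d)) (hmin : ∀ y, f xstar ≤ f y)
    (x₀ : EuclideanSpace ℝ (Fin d))
    (z₁ : EuclideanSpace ℝ (Fin d)) (hz₁ : z₁ = x₀ - (2 / L) • f' x₀) :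
    (f x₀ - (1 / (2 * L)) * ‖f' x₀‖ ^ 2) - f xstar
        + L / 4 * ‖z₁ - xstar‖ ^ 2 ≤ L / 4 * ‖x₀ - xstar‖ ^ 2 := by
  have hstar : f' xstar = 0 :=
    IsLocalMin.hasGradientAt_eq_zero (Filter.Eventually.of_forall hmin) (hdiff xstar)
  have hinterp := hconv.add_inner_add_sq_norm_sub_le hdiff hsmooth hL x₀ xstar
  rw [hstar, zero_sub, norm_neg] at hinterp
  have hz : z₁ - xstar = -((xstar - x₀) + (2 / L) • f' x₀) := by rw [hz₁]; abel
  have expand : L / 4 * ‖z₁ - xstar‖ ^ 2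
      = L / 4 * ‖x₀ - xstar‖ ^ 2 + ⟪f' x₀, xstar - x₀⟫_ℝ + 1 / L * ‖f' x₀‖ ^ 2 := by
    rw [hz, norm_neg, norm_add_sq_real, real_inner_smul_right, norm_smul, Real.norm_eq_abs,
      abs_of_pos (by positivity), norm_sub_rev, real_inner_comm]
    field_simp
    ring
  rw [expand]
  have halve : 1 / L * ‖f' x₀‖ ^ 2 = 2 * (1 / (2 * L) * ‖f' x₀‖ ^ 2) := by field_simp
  linarith
end

section
/- Let τ_{1/2} > 0 and define recursively δ_n = δ(τ_{n−1}) with δ(τ) = 1 + √(1+2τ) (for n < N) or (1+√(1+4τ))/2 (for n = N), τ_n = τ_{n−1} + δ_n, η_n = 1/(2 τ_{1/2} δ_n), and η_i = (1 + Σ_{j=n}^{i−1} δ_j² η_j)/(2 τ_{i−1} δ_i) for i > n. Then for all i in [n, N], δ_{i+1} η_{i+1} = (δ_i − 1) η_i (for i < N). -/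
/-!
Write `p i` for the rate preceding step `i` (`τ_{1/2}` at `i = n`, else `τ_{i-1}`) and
`S i = 1 + ∑_{n ≤ j < i} δ_j² η_j`, so that `η_i = S_i / (2 p_i δ_i)` for every `i ≥ n`.
For `i < N` the OGM increment satisfies `δ_i² = 2 (p_i + δ_i) = 2 τ_i`, hence
`S_{i+1} = S_i + δ_i² η_i = (2 p_i + δ_i) δ_i η_i = (δ_i - 1) δ_i² η_i`, and dividing by
`2 p_{i+1} = 2 τ_i = δ_i²` gives `δ_{i+1} η_{i+1} = (δ_i - 1) η_i`.
-/

open Finset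

lemma sq_one_add_sqrt_one_add_two_mul {t : ℝ} (ht : 0 ≤ 1 + 2 * t) :
    (1 + √(1 + 2 * t)) ^ 2 = 2 * (t + (1 + √(1 + 2 * t))) := by
  have hsq : √(1 + 2 * t) ^ 2 = 1 + 2 * t := Real.sq_sqrt ht
  linear_combination hsq

lemma mul_eq_sub_one_mul_of_sq_eq {t d e S d' e' : ℝ} (ht : t ≠ 0) (hd : d ≠ 0) (hd' : d' ≠ 0)
    (hsq : d ^ 2 = 2 * (t + d)) (he : e = S / (2 * t * d))
    (he' : e' = (S + d ^ 2 * e) / (2 * (t + d) * d')) :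
    d' * e' = (d - 1) * e := by
  have hS : S = 2 * t * d * e := by rw [he]; field_simp
  have htd : t + d ≠ 0 := by
    intro h
    rw [h, mul_zero] at hsq
    exact hd (pow_eq_zero_iff two_ne_zero |>.mp hsq)
  rw [he', hS]
  field_simp
  linear_combination (-e) * hsq

section Rates

variable {n N : ℕ} {τhalf : ℝ} {δ τ : ℕ → ℝ}

lemma prev_rate_pos (hτ : 0 < τhalf) (hδ : ∀ i, n ≤ i → i ≤ N → 0 < δ i)
    (hτrec : ∀ i, n ≤ i → i ≤ N → τ i = (if i = n then τhalf else τ (i - 1)) + δ i) :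
    ∀ i, n ≤ i → i ≤ N → 0 < if i = n then τhalf else τ (i - 1) := by
  intro i hni
  induction i, hni using Nat.le_induction with
  | base => exact fun _ => by simpa using hτ
  | succ m hnm ih =>
    intro hmN
    rw [if_neg (by omega), Nat.add_sub_cancel, hτrec m hnm (by omega)]
    exact add_pos (ih (by omega)) (hδ m hnm (by omega))

end Rates

theorem eta_telescoping_general (N n : ℕ) (τhalf : ℝ) (hτ : 0 < τhalf)
    (δ τ η : ℕ → ℝ)
    (hδ : ∀ i, n ≤ i → i ≤ N →
      δ i = if i < N then 1 + Real.sqrt (1 + 2 * (if i = n then τhalf else τ (i - 1)))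
            else (1 + Real.sqrt (1 + 4 * (if i = n then τhalf else τ (i - 1)))) / 2)
    (hτrec : ∀ i, n ≤ i → i ≤ N →
      τ i = (if i = n then τhalf else τ (i - 1)) + δ i)
    (hηn : η n = 1 / (2 * τhalf * δ n))
    (hηi : ∀ i, n < i → i ≤ N →
      η i = (1 + ∑ j ∈ Finset.Ico n i, (δ j) ^ 2 * η j) / (2 * τ (i - 1) * δ i)) :
    ∀ i, n ≤ i → i < N → δ (i + 1) * η (i + 1) = (δ i - 1) * η i := by
  have hδpos : ∀ i, n ≤ i → i ≤ N → 0 < δ i := by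
    intro i hni hiN
    rw [hδ i hni hiN]
    split <;> positivity
  intro i hni hiN
  have hprev := prev_rate_pos hτ hδpos hτrec i hni hiN.le
  have hη : η i = (1 + ∑ j ∈ Ico n i, δ j ^ 2 * η j) /
      (2 * (if i = n then τhalf else τ (i - 1)) * δ i) := by
    rcases hni.eq_or_lt with rfl | hlt
    · simpa using hηn
    · simpa [hlt.ne'] using hηi i hlt hiN.le
  have hη' := hηi (i + 1) (by omega) hiN
  rw [Nat.add_sub_cancel, sum_Ico_succ_top hni, hτrec i hni hiN.le, ← add_assoc] at hη'
  refine mul_eq_sub_one_mul_of_sq_eq hprev.ne' (hδpos i hni hiN.le).ne'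
    (hδpos (i + 1) (by omega) hiN).ne' ?_ hη hη'
  rw [hδ i hni hiN.le, if_pos hiN]
  exact sq_one_add_sqrt_one_add_two_mul (by linarith)

theorem eta_telescoping (N n : ℕ) (hnN : n ≤ N) (τhalf : ℝ) (hτ : 0 < τhalf)
    (δ τ η : ℕ → ℝ)
    (hδ : ∀ i, n ≤ i → i ≤ N →
      δ i = if i < N then 1 + Real.sqrt (1 + 2 * (if i = n then τhalf else τ (i - 1)))
            else (1 + Real.sqrt (1 + 4 * (if i = n then τhalf else τ (i - 1)))) / 2)
    (hτrec : ∀ i, n ≤ i → i ≤ N →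
      τ i = (if i = n then τhalf else τ (i - 1)) + δ i)
    (hηn : η n = 1 / (2 * τhalf * δ n))
    (hηi : ∀ i, n < i → i ≤ N →
      η i = (1 + ∑ j ∈ Finset.Ico n i, (δ j) ^ 2 * η j) / (2 * τ (i - 1) * δ i)) :
    ∀ i, n ≤ i → i < N → δ (i + 1) * η (i + 1) = (δ i - 1) * η i :=
  eta_telescoping_general N n τhalf hτ δ τ η hδ hτrec hηn hηi
end

section
/- With the setup of the SPGM lower bound construction (τ_{n,i}, δ_i, η_i defined as in the paper), for all i ∈ [n, N]: 0 < 1/(2τ_{n,i}(δ_i − 1)) ≤ η_i ≤ 1/(2τ_{n−1/2} δ_i). -/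
theorem eta_bounds (N n : ℕ) (hnN : n ≤ N) (τhalf : ℝ) (hτ : 0 < τhalf)
    (δ τ η : ℕ → ℝ)
    (hδ : ∀ i, n ≤ i → i ≤ N →
      δ i = if i < N then 1 + Real.sqrt (1 + 2 * (if i = n then τhalf else τ (i - 1)))
            else (1 + Real.sqrt (1 + 4 * (if i = n then τhalf else τ (i - 1)))) / 2)
    (hτrec : ∀ i, n ≤ i → i ≤ N →
      τ i = (if i = n then τhalf else τ (i - 1)) + δ i)
    (hηn : η n = 1 / (2 * τhalf * δ n))
    (hηi : ∀ i, n < i → i ≤ N →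
      η i = (1 + ∑ j ∈ Finset.Ico n i, (δ j) ^ 2 * η j) / (2 * τ (i - 1) * δ i)) :
    ∀ i, n ≤ i → i ≤ N →
      0 < 1 / (2 * τ i * (δ i - 1)) ∧
      1 / (2 * τ i * (δ i - 1)) ≤ η i ∧
      η i ≤ 1 / (2 * τhalf * δ i) := by
  -- δ is > 1 whenever its "previous τ" is positive
  have hδgt : ∀ i, n ≤ i → i ≤ N → 0 < (if i = n then τhalf else τ (i - 1)) → 1 < δ i := by
    intro i h1 h2 hp
    rw [hδ i h1 h2]
    set t := (if i = n then τhalf else τ (i - 1)) with ht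
    split
    · have := Real.sqrt_pos.mpr (show (0:ℝ) < 1 + 2 * t by linarith)
      linarith
    · have h0 : (0:ℝ) ≤ 1 + 4 * t := by linarith
      have hs := Real.sq_sqrt h0
      have hn0 := Real.sqrt_nonneg (1 + 4 * t)
      nlinarith
  have key : ∀ i, n ≤ i → i ≤ N →
      0 < (if i = n then τhalf else τ (i - 1)) ∧
      1 ≤ 1 + ∑ j ∈ Finset.Ico n i, (δ j) ^ 2 * η j ∧
      τhalf * (1 + ∑ j ∈ Finset.Ico n i, (δ j) ^ 2 * η j) ≤
        (if i = n then τhalf else τ (i - 1)) ∧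
      1 < δ i ∧
      η i * (2 * (if i = n then τhalf else τ (i - 1)) * δ i) =
        1 + ∑ j ∈ Finset.Ico n i, (δ j) ^ 2 * η j := by
    intro i hni
    induction i, hni using Nat.le_induction with
    | base =>
      intro _
      simp only [if_pos rfl, eq_self_iff_true, if_true, Finset.Ico_self, Finset.sum_empty, add_zero]
      have hδn : 1 < δ n := by
        apply hδgt n le_rfl hnN
        simp [hτ]
      refine ⟨hτ, le_rfl, by linarith, hδn, ?_⟩
      rw [hηn]
      field_simp
    | succ i hni ih =>
      intro hN1
      have hiN : i < N := by omega
      obtain ⟨hp, hA1, hup, hδi, hηeq⟩ := ih (le_of_lt hiN)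
      set tp := (if i = n then τhalf else τ (i - 1)) with htp
      have hτi : τ i = tp + δ i := hτrec i hni (le_of_lt hiN)
      have hif : ¬ (i + 1 = n) := by omega
      have hsub : i + 1 - 1 = i := by omega
      simp only [if_neg hif, hsub]
      have hτipos : 0 < τ i := by rw [hτi]; linarith
      have hD : 0 < 2 * tp * δ i := by
        apply mul_pos (by linarith) (by linarith)
      have hηpos : 0 < η i := by nlinarith
      have hsum : ∑ j ∈ Finset.Ico n (i+1), (δ j) ^ 2 * η j
          = (∑ j ∈ Finset.Ico n i, (δ j) ^ 2 * η j) + (δ i) ^ 2 * η i :=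
        Finset.sum_Ico_succ_top hni _
      have hterm : 0 ≤ (δ i) ^ 2 * η i := by positivity
      have hδ1gt : 1 < δ (i+1) := by
        apply hδgt (i+1) (by omega) hN1
        simp only [if_neg hif, hsub]
        exact hτipos
      refine ⟨hτipos, by rw [hsum]; linarith, ?_, hδ1gt, ?_⟩
      · -- upper bound invariant
        have h1 : τhalf * ((δ i) ^ 2 * η i) ≤ δ i / 2 := by
          have h2 : τhalf * ((δ i) ^ 2 * η i) * (2 * tp)
              = τhalf * (1 + ∑ j ∈ Finset.Ico n i, (δ j) ^ 2 * η j) * δ i := by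
            linear_combination (τhalf * δ i) * hηeq
          have h3 : τhalf * (1 + ∑ j ∈ Finset.Ico n i, (δ j) ^ 2 * η j) * δ i
              ≤ tp * δ i := by nlinarith
          nlinarith
        rw [hsum, hτi]
        nlinarith
      · -- η recursion identity
        have hη1 := hηi (i+1) (by omega) hN1
        simp only [hsub] at hη1
        rw [hη1]
        have hD1 : (2 * τ i * δ (i+1)) ≠ 0 := by
          apply ne_of_gt
          apply mul_pos (by linarith) (by linarith)
        field_simp
  intro i hni hiN
  obtain ⟨hp, hA1, hup, hδi, hηeq⟩ := key i hni hiN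
  set tp := (if i = n then τhalf else τ (i - 1)) with htp
  set A := 1 + ∑ j ∈ Finset.Ico n i, (δ j) ^ 2 * η j with hA
  have hτi : τ i = tp + δ i := hτrec i hni hiN
  have hτpos : 0 < τ i := by rw [hτi]; linarith
  have hD : 0 < 2 * tp * δ i := mul_pos (by linarith) (by linarith)
  have hη : η i = A / (2 * tp * δ i) := by
    rw [eq_div_iff hD.ne']; exact hηeq
  -- key inequality: tp * δ i ≤ τ i * (δ i - 1)
  have hkey : tp * δ i ≤ τ i * (δ i - 1) := by
    have hδi' := hδ i hni hiN
    rw [← htp] at hδi'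
    by_cases hc : i < N
    · rw [if_pos hc] at hδi'
      have h0 : (0:ℝ) ≤ 1 + 2 * tp := by linarith
      have hs := Real.sq_sqrt h0
      have hn0 := Real.sqrt_nonneg (1 + 2 * tp)
      nlinarith [sq_nonneg (1 + Real.sqrt (1 + 2 * tp))]
    · rw [if_neg hc] at hδi'
      have h0 : (0:ℝ) ≤ 1 + 4 * tp := by linarith
      have hs := Real.sq_sqrt h0
      have hn0 := Real.sqrt_nonneg (1 + 4 * tp)
      nlinarith
  have hE : 0 < 2 * τ i * (δ i - 1) := mul_pos (by linarith) (by linarith)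
  refine ⟨one_div_pos.mpr hE, ?_, ?_⟩
  · rw [hη, div_le_div_iff₀ hE hD]
    nlinarith [mul_le_mul_of_nonneg_left hA1 (le_of_lt (mul_pos hτpos (show (0:ℝ) < δ i - 1 by linarith)))]
  · rw [hη, div_le_div_iff₀ (by positivity) (by positivity)]
    nlinarith [mul_le_mul_of_nonneg_right hup (show (0:ℝ) ≤ δ i by linarith)]
end

section
/- Suppose τ > 0, δ = (1+√(1+4τ'))/2 where τ_N = τ' + δ (i.e., δ² = τ_N), and constants Δ > 0, η_j for j ∈ [n,N] satisfy the SPGM construction with f_N − f_⋆ = (LΔ/2)(2δ_N − 1)η_N and ‖x₀ − z_{N+1}‖² = Δ(1 + Σ_{j=n}^{N} δ_j² η_j). Then f_N − f_⋆ = (L/(2τ_{n,N}))‖x₀ − z_{N+1}‖². -/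
/-! The last step length `δ_N` is the positive root of `δ² = τ_{n,N-1} + δ = τ_{n,N}`, and `η_N`
is chosen so that `2 τ_{n,N-1} δ_N η_N = 1 + Σ_{j<N} δ_j² η_j`. Substituting both into
`f_N - f_⋆` and `‖x₀ - z_{N+1}‖²` reduces the claim to the identity
`(2δ - 1)(τ' + δ) = δ (2τ' + δ)`, which is `δ² = τ' + δ` again. -/

theorem sq_one_add_sqrt_div_two {t : ℝ} (ht : 0 ≤ 1 + 4 * t) :
    ((1 + √(1 + 4 * t)) / 2) ^ 2 = t + (1 + √(1 + 4 * t)) / 2 := by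
  have hs := Real.sq_sqrt ht
  linear_combination hs / 4

theorem two_mul_sub_one_mul_add_mul_div_eq {t δ s : ℝ} (ht : t ≠ 0) (hδ : δ ≠ 0)
    (hsq : δ ^ 2 = t + δ) :
    (2 * δ - 1) * (t + δ) * (s / (2 * t * δ)) = s + δ ^ 2 * (s / (2 * t * δ)) := by
  field_simp
  linear_combination s * hsq

theorem pos_of_add_recursion {n N : ℕ} {τ₀ : ℝ} (hτ₀ : 0 < τ₀) {δ τ : ℕ → ℝ}
    (hδ : ∀ i, n ≤ i → i ≤ N → 0 < δ i)
    (hτ : ∀ i, n ≤ i → i ≤ N → τ i = (if i = n then τ₀ else τ (i - 1)) + δ i) :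
    ∀ i, n ≤ i → i ≤ N → 0 < τ i := by
  intro i hni
  induction i, hni using Nat.le_induction with
  | base =>
    intro hnN
    rw [hτ n le_rfl hnN, if_pos rfl]
    exact add_pos hτ₀ (hδ n le_rfl hnN)
  | succ i hni ih =>
    intro hiN
    rw [hτ (i + 1) (by omega) hiN, if_neg (by omega), Nat.add_sub_cancel]
    exact add_pos (ih (by omega)) (hδ (i + 1) (by omega) hiN)

theorem spgm_exact_suboptimality_general (N n : ℕ) (hnN : n ≤ N) (τhalf : ℝ) (hτ : 0 < τhalf)
    (δ τ η : ℕ → ℝ)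
    (hδ : ∀ i, n ≤ i → i ≤ N →
      δ i = if i < N then 1 + Real.sqrt (1 + 2 * (if i = n then τhalf else τ (i - 1)))
            else (1 + Real.sqrt (1 + 4 * (if i = n then τhalf else τ (i - 1)))) / 2)
    (hτrec : ∀ i, n ≤ i → i ≤ N →
      τ i = (if i = n then τhalf else τ (i - 1)) + δ i)
    (hηn : η n = 1 / (2 * τhalf * δ n))
    (hηi : ∀ i, n < i → i ≤ N →
      η i = (1 + ∑ j ∈ Finset.Ico n i, (δ j) ^ 2 * η j) / (2 * τ (i - 1) * δ i))
    (L Δ : ℝ)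
    (fN fstar D2 : ℝ)
    (hfN : fN - fstar = L * Δ / 2 * ((2 * δ N - 1) * η N))
    (hD2 : D2 = Δ * (1 + ∑ j ∈ Finset.Icc n N, (δ j) ^ 2 * η j)) :
    fN - fstar = L / (2 * τ N) * D2 := by
  have hδpos : ∀ i, n ≤ i → i ≤ N → 0 < δ i := fun i hni hiN => by
    rw [hδ i hni hiN]
    split <;> positivity
  have hτpos := pos_of_add_recursion hτ hδpos hτrec
  set τ' := if N = n then τhalf else τ (N - 1)
  have hτ'pos : 0 < τ' := by
    dsimp only [τ']
    split
    · exact hτ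
    · exact hτpos (N - 1) (by omega) (by omega)
  have hδN : δ N = (1 + √(1 + 4 * τ')) / 2 := by
    rw [hδ N hnN le_rfl, if_neg (lt_irrefl N)]
  have hsq : δ N ^ 2 = τ' + δ N := hδN ▸ sq_one_add_sqrt_div_two (by linarith)
  have hτN : τ N = τ' + δ N := hτrec N hnN le_rfl
  set S := ∑ j ∈ Finset.Ico n N, δ j ^ 2 * η j
  have hηN : η N = (1 + S) / (2 * τ' * δ N) := by
    rcases hnN.eq_or_lt with rfl | hlt
    · simp [S, τ', hηn]
    · rw [hηi N hlt le_rfl]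
      simp only [S, τ', if_neg hlt.ne']
  have hsum : ∑ j ∈ Finset.Icc n N, δ j ^ 2 * η j = S + δ N ^ 2 * η N := by
    rw [← Finset.Ico_add_one_right_eq_Icc, Finset.sum_Ico_succ_top hnN]
  have hτN0 : τ N ≠ 0 := (hτpos N hnN le_rfl).ne'
  rw [hfN, hD2, hsum, ← add_assoc, hηN,
    ← two_mul_sub_one_mul_add_mul_div_eq hτ'pos.ne' (hδpos N hnN le_rfl).ne' hsq, ← hτN]
  field_simp

theorem spgm_exact_suboptimality (N n : ℕ) (hnN : n ≤ N) (τhalf : ℝ) (hτ : 0 < τhalf)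
    (δ τ η : ℕ → ℝ)
    (hδ : ∀ i, n ≤ i → i ≤ N →
      δ i = if i < N then 1 + Real.sqrt (1 + 2 * (if i = n then τhalf else τ (i - 1)))
            else (1 + Real.sqrt (1 + 4 * (if i = n then τhalf else τ (i - 1)))) / 2)
    (hτrec : ∀ i, n ≤ i → i ≤ N →
      τ i = (if i = n then τhalf else τ (i - 1)) + δ i)
    (hηn : η n = 1 / (2 * τhalf * δ n))
    (hηi : ∀ i, n < i → i ≤ N →
      η i = (1 + ∑ j ∈ Finset.Ico n i, (δ j) ^ 2 * η j) / (2 * τ (i - 1) * δ i))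
    (L Δ : ℝ) (hL : 0 < L) (hΔ : 0 < Δ)
    (fN fstar D2 : ℝ)
    (hfN : fN - fstar = L * Δ / 2 * ((2 * δ N - 1) * η N))
    (hD2 : D2 = Δ * (1 + ∑ j ∈ Finset.Icc n N, (δ j) ^ 2 * η j)) :
    fN - fstar = L / (2 * τ N) * D2 :=
  spgm_exact_suboptimality_general N n hnN τhalf hτ δ τ η hδ hτrec hηn hηi L Δ fN fstar D2 hfN hD2
end

section
/- Suppose the point (μ, λ_⋆) with μ, λ_⋆ ∈ ℝ^n nonnegative is feasible for the SPGM subproblem: with z := x₀ + Zμ − Gλ_⋆ it holds (L/2)(‖z‖² − ‖x₀‖²) ≤ ⟨μ, h − f⁺τ⟩ + ⟨λ_⋆, q − f⁺𝟏⟩, where for each i, h_i = τ_i f_i⁺ − (L/2)‖x₀‖² + (L/2)‖z_{i+1}‖², q_i = f_i⁺ − ⟨g_i, x_i⁺⟩, f⁺ = min_i f_i⁺, and additionally H_i := τ_i(f_⋆ − f_i⁺) + (L/2)‖x₀−x_⋆‖² − (L/2)‖z_{i+1}−x_⋆‖² ≥ 0 and Q_{⋆,i} := f_⋆ − f_i⁺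 − ⟨g_i, x_⋆ − x_i⁺⟩ ≥ 0 for all i. Then with τ := ⟨τ-vector, μ⟩ + ⟨𝟏, λ_⋆⟩, one has τ(f_⋆ − f⁺) + (L/2)‖x₀−x_⋆‖² − (L/2)‖z−x_⋆‖² ≥ 0. -/
open RealInnerProductSpace

theorem spgm_subproblem_feasible_gives_aux {d n : ℕ} (hn : 0 < n)
    (L : ℝ) (hL : 0 < L)
    (x₀ xstar : EuclideanSpace ℝ (Fin d)) (fstar : ℝ)
    (τv fp : Fin n → ℝ)
    (xp zv g : Fin n → EuclideanSpace ℝ (Fin d))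
    (μ lam : Fin n → ℝ) (hμ : ∀ i, 0 ≤ μ i) (hlam : ∀ i, 0 ≤ lam i)
    (fplus : ℝ)
    (hfplus : (∃ m, fplus = fp m) ∧ ∀ i, fplus ≤ fp i)
    (h q : Fin n → ℝ)
    (hh : ∀ i, h i = τv i * fp i - L / 2 * ‖x₀‖ ^ 2 + L / 2 * ‖zv i‖ ^ 2)
    (hq : ∀ i, q i = fp i - ⟪g i, xp i⟫)
    (z : EuclideanSpace ℝ (Fin d))
    (hz : z = x₀ + (∑ i, μ i • (zv i - x₀)) - ∑ i, lam i • ((1 / L) • g i))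
    (hfeas : L / 2 * (‖z‖ ^ 2 - ‖x₀‖ ^ 2)
      ≤ (∑ i, μ i * (h i - fplus * τv i)) + ∑ i, lam i * (q i - fplus))
    (hH : ∀ i, 0 ≤ τv i * (fstar - fp i) + L / 2 * ‖x₀ - xstar‖ ^ 2
                  - L / 2 * ‖zv i - xstar‖ ^ 2)
    (hQ : ∀ i, 0 ≤ fstar - fp i - ⟪g i, xstar - xp i⟫)
    (τ : ℝ) (hτ : τ = (∑ i, μ i * τv i) + ∑ i, lam i) :
    0 ≤ τ * (fstar - fplus) + L / 2 * ‖x₀ - xstar‖ ^ 2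
        - L / 2 * ‖z - xstar‖ ^ 2 := by
  have key : ∀ a : EuclideanSpace ℝ (Fin d),
      L / 2 * ‖x₀ - xstar‖ ^ 2 - L / 2 * ‖a - xstar‖ ^ 2
        = L / 2 * ‖x₀‖ ^ 2 - L / 2 * ‖a‖ ^ 2 + L * ⟪a - x₀, xstar⟫ := by
    intro a
    rw [norm_sub_sq_real, norm_sub_sq_real, inner_sub_left]
    ring
  have hA : 0 ≤ ∑ i, μ i * (τv i * (fstar - fp i) + L / 2 * ‖x₀ - xstar‖ ^ 2
      - L / 2 * ‖zv i - xstar‖ ^ 2) :=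
    Finset.sum_nonneg fun i _ => mul_nonneg (hμ i) (hH i)
  have hB : 0 ≤ ∑ i, lam i * (fstar - fp i - ⟪g i, xstar - xp i⟫) :=
    Finset.sum_nonneg fun i _ => mul_nonneg (hlam i) (hQ i)
  have hzx : z - x₀ = (∑ i, μ i • (zv i - x₀)) - ∑ i, lam i • ((1 / L) • g i) := by
    rw [hz]; abel
  have hzinner : ⟪z - x₀, xstar⟫
      = (∑ i, μ i * ⟪zv i - x₀, xstar⟫) - ∑ i, lam i * ((1 / L) * ⟪g i, xstar⟫) := by
    rw [hzx, inner_sub_left, sum_inner, sum_inner]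
    simp only [real_inner_smul_left]
  -- combine the μ-sums
  have hμsum : (∑ i, μ i * (τv i * (fstar - fp i) + L / 2 * ‖x₀ - xstar‖ ^ 2
        - L / 2 * ‖zv i - xstar‖ ^ 2)) + ∑ i, μ i * (h i - fplus * τv i)
      = ∑ i, (μ i * τv i * (fstar - fplus) + μ i * (L * ⟪zv i - x₀, xstar⟫)) := by
    rw [← Finset.sum_add_distrib]
    refine Finset.sum_congr rfl fun i _ => ?_
    rw [hh i]
    linear_combination μ i * key (zv i)
  have hlamsum : (∑ i, lam i * (fstar - fp i - ⟪g i, xstar - xp i⟫))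
        + ∑ i, lam i * (q i - fplus)
      = ∑ i, (lam i * (fstar - fplus) - lam i * ⟪g i, xstar⟫) := by
    rw [← Finset.sum_add_distrib]
    refine Finset.sum_congr rfl fun i _ => ?_
    rw [hq i, inner_sub_right]
    ring
  have hzkey := key z
  -- expand the combined sums
  have e1 : (∑ i, (μ i * τv i * (fstar - fplus) + μ i * (L * ⟪zv i - x₀, xstar⟫)))
      = (fstar - fplus) * (∑ i, μ i * τv i) + L * ∑ i, μ i * ⟪zv i - x₀, xstar⟫ := by
    rw [Finset.sum_add_distrib, Finset.mul_sum, Finset.mul_sum]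
    congr 1 <;> refine Finset.sum_congr rfl fun i _ => by ring
  have e2 : (∑ i, (lam i * (fstar - fplus) - lam i * ⟪g i, xstar⟫))
      = (fstar - fplus) * (∑ i, lam i) - L * ∑ i, lam i * ((1 / L) * ⟪g i, xstar⟫) := by
    rw [Finset.sum_sub_distrib, Finset.mul_sum, Finset.mul_sum]
    congr 1 <;> refine Finset.sum_congr rfl fun i _ => ?_
    · ring
    · field_simp
  rw [hτ]
  linarith [hμsum, hlamsum, hA, hB, hfeas, hzkey, e1, e2,
    mul_left_cancel₀ (ne_of_gt hL) (rfl : L * ⟪z - x₀, xstar⟫ = L * ⟪z - x₀, xstar⟫),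
    congrArg (fun t : ℝ => L * t) hzinner]
end
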